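/- Let p be a prime and (a,b,c) integers. For each integer n, the number of triples (h, x, y) with 0 ≤ h < p, x ≡ 0 (mod p), y not ≡ 0 (mod p), and ax² + (b+2ah)xy + (ah²+bh+c)y² = n equals the number of pairs (x, y) ∈ ℤ² with y not ≡ 0 (mod p) and ax² + bxy + cy² = n. -/

import Mathlib

/-!
The shear `(h, x, y) ↦ (x + h y, y)` turns `a x² + (b + 2ah) x y + (ah² + bh + c) y²` into
`a x² + b x y + c y²`. When `y` is invertible mod `m`, a pair `(x', y)` is hit by exactly one
triple with `0 ≤ h < m` and `m ∣ x`: the condition `m ∣ x' - h y` forces `h ≡ x' y⁻¹ (mod m)`.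
-/

def shearIndex (m : ℕ) (x y : ℤ) : ℤ := ((x : ZMod m) * (y : ZMod m)⁻¹).val

lemma shearIndex_nonneg {m : ℕ} (x y : ℤ) : 0 ≤ shearIndex m x y := Int.natCast_nonneg _

section

variable {m : ℕ} [NeZero m]

lemma shearIndex_lt (x y : ℤ) : shearIndex m x y < m := Int.ofNat_lt.mpr (ZMod.val_lt _)

lemma dvd_sub_mul_iff_eq_shearIndex {x y h : ℤ} (hy : IsUnit (y : ZMod m)) (h0 : 0 ≤ h)
    (hm : h < m) : (m : ℤ) ∣ x - h * y ↔ h = shearIndex m x y := by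
  calc (m : ℤ) ∣ x - h * y ↔ (h : ZMod m) * y = x := by
        rw [← ZMod.intCast_zmod_eq_zero_iff_dvd, Int.cast_sub, Int.cast_mul, sub_eq_zero, eq_comm]
    _ ↔ (h : ZMod m) = x * (y : ZMod m)⁻¹ := by
        constructor <;> intro e
        · rw [← e, mul_assoc, ZMod.mul_inv_of_unit _ hy, mul_one]
        · rw [e, mul_assoc, ZMod.inv_mul_of_unit _ hy, mul_one]
    _ ↔ h = shearIndex m x y := by
        rw [shearIndex]
        constructor <;> intro e
        · rw [← e, ZMod.val_intCast, Int.emod_eq_of_lt h0 hm]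
        · rw [e, Int.cast_natCast, ZMod.natCast_zmod_val]

def shearEquiv (Q : ℤ × ℤ → Prop) (hQ : ∀ v, Q v → IsUnit (v.2 : ZMod m)) :
    {t : ℤ × ℤ × ℤ // 0 ≤ t.1 ∧ t.1 < m ∧ (m : ℤ) ∣ t.2.1 ∧ Q (t.2.1 + t.1 * t.2.2, t.2.2)} ≃
      {v : ℤ × ℤ // Q v} where
  toFun t := ⟨(t.1.2.1 + t.1.1 * t.1.2.2, t.1.2.2), t.2.2.2.2⟩
  invFun v := ⟨(shearIndex m v.1.1 v.1.2, v.1.1 - shearIndex m v.1.1 v.1.2 * v.1.2, v.1.2),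
    shearIndex_nonneg _ _, shearIndex_lt _ _,
    (dvd_sub_mul_iff_eq_shearIndex (hQ _ v.2) (shearIndex_nonneg _ _) (shearIndex_lt _ _)).mpr rfl,
    by simpa using v.2⟩
  left_inv := by
    rintro ⟨⟨h, x, y⟩, h0, hm, hx, hQy⟩
    have hh : h = shearIndex m (x + h * y) y :=
      (dvd_sub_mul_iff_eq_shearIndex (hQ _ hQy) h0 hm).mp (by simpa using hx)
    ext <;> simp [← hh]
  right_inv _ := by simp

end

theorem stmt_8 (p : ℕ) (hp : p.Prime) (a b c : ℤ) (n : ℤ) :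
    Nat.card {t : ℤ × ℤ × ℤ //
        0 ≤ t.1 ∧ t.1 < p ∧ (p : ℤ) ∣ t.2.1 ∧ ¬ (p : ℤ) ∣ t.2.2 ∧
        a * t.2.1 ^ 2 + (b + 2 * a * t.1) * t.2.1 * t.2.2 +
          (a * t.1 ^ 2 + b * t.1 + c) * t.2.2 ^ 2 = n} =
      Nat.card {v : ℤ × ℤ //
        ¬ (p : ℤ) ∣ v.2 ∧ a * v.1 ^ 2 + b * v.1 * v.2 + c * v.2 ^ 2 = n} := by
  have := Fact.mk hp
  have hunit (v : ℤ × ℤ) (hv : ¬ (p : ℤ) ∣ v.2 ∧ a * v.1 ^ 2 + b * v.1 * v.2 + c * v.2 ^ 2 = n) :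
      IsUnit (v.2 : ZMod p) :=
    isUnit_iff_ne_zero.mpr ((ZMod.intCast_zmod_eq_zero_iff_dvd _ _).not.mpr hv.1)
  rw [← Nat.card_congr (shearEquiv _ hunit)]
  refine Nat.card_congr (Equiv.subtypeEquivRight fun t => ?_)
  have hform : a * (t.2.1 + t.1 * t.2.2) ^ 2 + b * (t.2.1 + t.1 * t.2.2) * t.2.2 + c * t.2.2 ^ 2 =
      a * t.2.1 ^ 2 + (b + 2 * a * t.1) * t.2.1 * t.2.2 + (a * t.1 ^ 2 + b * t.1 + c) * t.2.2 ^ 2 := by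
    ring
  simp only [hform]
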